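/- In R = Q[x_1,...,x_9], the ideal I = (x_1x_2, x_1x_3, x_2x_4, x_4x_5, x_4x_6, x_6x_7, x_6x_8, x_6x_9) satisfies Rad I = Rad(x_2x_4, x_1x_2 + x_4x_6, x_4x_5 + x_6x_7, x_1x_3, x_6x_8, x_6x_9); in particular ara I ≤ 6. -/

import Mathlib

/-!
Write `p = x₁x₂`, `q = x₄x₆`. The second ideal contains `p + q` and `x₂x₄`, hence `pq`, and
`q² = q(p + q) - pq`; so `p` and `q` lie in its radical. With `x₄x₆` available, the same trick
applied to `x₄x₅ + x₆x₇` yields `x₄x₅` and `x₆x₇`, and all generators of `I` are recovered.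
-/

open MvPolynomial

/-- The arithmetical rank of an ideal: the least number of elements generating it up to
radical. -/
noncomputable def ara {R : Type*} [CommRing R] (J : Ideal R) : ℕ :=
  sInf {s : ℕ | ∃ f : Fin s → R,
    Ideal.radical (Ideal.span (Set.range f)) = Ideal.radical J}

theorem Ideal.mem_radical_of_add_mem_radical_of_mul_mem_radical {R : Type*} [CommRing R]
    {J : Ideal R} {p q : R} (hadd : p + q ∈ J.radical) (hmul : p * q ∈ J.radical) :
    p ∈ J.radical ∧ q ∈ J.radical := by
  have hq : q ∈ J.radical := by
    refine Ideal.mem_radical_of_pow_mem (m := 2) ?_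
    have hsq : q ^ 2 = q * (p + q) - p * q := by ring
    rw [hsq]
    exact sub_mem (J.radical.mul_mem_left q hadd) hmul
  exact ⟨by simpa using sub_mem hadd hq, hq⟩

theorem ara_le_of_radical_span_range_eq {R : Type*} [CommRing R] {J : Ideal R} {n : ℕ}
    (f : Fin n → R) (h : (Ideal.span (Set.range f)).radical = J.radical) : ara J ≤ n :=
  Nat.sInf_le ⟨f, h⟩

-- The variables `x_1, …, x_9` are `X 0, …, X 8`.
theorem example2 (I : Ideal (MvPolynomial (Fin 9) ℚ))
    (hI : I = Ideal.span
      {X 0 * X 1, X 0 * X 2, X 1 * X 3, X 3 * X 4, X 3 * X 5, X 5 * X 6, X 5 * X 7,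
        X 5 * X 8}) :
    Ideal.radical I = Ideal.radical (Ideal.span
      {X 1 * X 3, X 0 * X 1 + X 3 * X 5, X 3 * X 4 + X 5 * X 6, X 0 * X 2, X 5 * X 7,
        X 5 * X 8}) ∧ ara I ≤ 6 := by
  set J : Ideal (MvPolynomial (Fin 9) ℚ) := Ideal.span
    {X 1 * X 3, X 0 * X 1 + X 3 * X 5, X 3 * X 4 + X 5 * X 6, X 0 * X 2, X 5 * X 7, X 5 * X 8}
  have gen : ∀ {p}, p ∈ ({X 1 * X 3, X 0 * X 1 + X 3 * X 5, X 3 * X 4 + X 5 * X 6, X 0 * X 2,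
      X 5 * X 7, X 5 * X 8} : Set (MvPolynomial (Fin 9) ℚ)) → p ∈ J.radical :=
    fun hp => Ideal.le_radical (Ideal.subset_span hp)
  have h0135 : X 0 * X 1 * (X 3 * X 5) ∈ J.radical := by
    rw [show (X 0 * X 1 * (X 3 * X 5) : MvPolynomial (Fin 9) ℚ) = X 0 * X 5 * (X 1 * X 3) by ring]
    exact J.radical.mul_mem_left _ (gen (by simp))
  obtain ⟨h01, h35⟩ := Ideal.mem_radical_of_add_mem_radical_of_mul_mem_radical
    (gen (by simp)) h0135
  have h3456 : X 3 * X 4 * (X 5 * X 6) ∈ J.radical := by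
    rw [show (X 3 * X 4 * (X 5 * X 6) : MvPolynomial (Fin 9) ℚ) = X 4 * X 6 * (X 3 * X 5) by ring]
    exact J.radical.mul_mem_left _ h35
  obtain ⟨h34, h56⟩ := Ideal.mem_radical_of_add_mem_radical_of_mul_mem_radical
    (gen (by simp)) h3456
  have hIJ : I ≤ J.radical := by
    simp only [hI, Ideal.span_le, Set.insert_subset_iff, Set.singleton_subset_iff,
      SetLike.mem_coe]
    refine ⟨h01, ?_, ?_, h34, h35, h56, ?_, ?_⟩ <;> exact gen (by simp)
  have hJI : J ≤ I := by
    simp only [J, hI, Ideal.span_le, Set.insert_subset_iff, Set.singleton_subset_iff,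
      SetLike.mem_coe]
    refine ⟨?_, add_mem ?_ ?_, add_mem ?_ ?_, ?_, ?_, ?_⟩ <;> exact Ideal.subset_span (by simp)
  have hrad : I.radical = J.radical :=
    le_antisymm (Ideal.radical_le_radical_iff.mpr hIJ) (Ideal.radical_mono hJI)
  refine ⟨hrad, ara_le_of_radical_span_range_eq
    ![X 1 * X 3, X 0 * X 1 + X 3 * X 5, X 3 * X 4 + X 5 * X 6, X 0 * X 2, X 5 * X 7, X 5 * X 8]
    ?_⟩
  rw [hrad]
  simp only [Matrix.range_cons, Matrix.range_empty, Set.union_empty, Set.singleton_union, J]
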